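/- arXiv:1502.05647 — 4 statements merged into one kernel-verified Lean document; each statement's English description precedes it below -/
import Mathlib

section
/- Let a, b, r : ℝ → ℝ be continuously differentiable functions, let m : ℝ → ℝ be continuous, and assume r(x) > 0 for every x ∈ ℝ. Then for all smooth compactly supported functions v₁, v₂ : ℝ → ℝ, ∫_ℝ [ −(a v₁′)′ v₁ − m v₁² + b v₂′ v₁ − (b v₁)′ v₂ − (r v₂′)′ v₂ ] dx = ∫_ℝ [ a (v₁′)² − (m + b²/r) v₁² ] dx + ∫_ℝ r ( v₂′ + (b/r) v₁ )² dx. -/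
open MeasureTheory

lemma integral_deriv_eq_zero_of_compactSupport {f : ℝ → ℝ}
    (hf : ContDiff ℝ 1 f) (hc : HasCompactSupport f) :
    ∫ x : ℝ, deriv f x = 0 := by
  have hint : Integrable (deriv f) :=
    (hf.continuous_deriv le_rfl).integrable_of_hasCompactSupport hc.deriv
  rw [← intervalIntegral.integral_Iic_add_Ioi (b := 0) hint.integrableOn hint.integrableOn,
    hc.integral_Iic_deriv_eq hf, hc.integral_Ioi_deriv_eq hf]
  ring

/-- Completion-of-square identity for the quadratic form of the linearised
Euler–Korteweg operator at transverse frequency `k = 0` (via Lemma 2.3). -/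
theorem quadratic_form_schur_identity
    (a b r m : ℝ → ℝ)
    (ha : ContDiff ℝ 1 a) (hb : ContDiff ℝ 1 b) (hr : ContDiff ℝ 1 r)
    (hm : Continuous m) (hrpos : ∀ x, 0 < r x)
    (v₁ v₂ : ℝ → ℝ)
    (hv₁ : ContDiff ℝ (⊤ : ℕ∞) v₁) (hv₂ : ContDiff ℝ (⊤ : ℕ∞) v₂)
    (hc₁ : HasCompactSupport v₁) (hc₂ : HasCompactSupport v₂) :
    ∫ x : ℝ,
      (-(deriv (fun y => a y * deriv v₁ y) x) * v₁ x
        - m x * (v₁ x) ^ 2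
        + b x * deriv v₂ x * v₁ x
        - deriv (fun y => b y * v₁ y) x * v₂ x
        - deriv (fun y => r y * deriv v₂ y) x * v₂ x)
    = (∫ x : ℝ, (a x * (deriv v₁ x) ^ 2 - (m x + (b x) ^ 2 / r x) * (v₁ x) ^ 2))
      + ∫ x : ℝ, r x * (deriv v₂ x + (b x / r x) * v₁ x) ^ 2 := by
  have hrne : ∀ x, r x ≠ 0 := fun x => (hrpos x).ne'
  have hv₁' : ContDiff ℝ 1 v₁ := hv₁.of_le (by simp)
  have hv₂' : ContDiff ℝ 1 v₂ := hv₂.of_le (by simp)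
  have hv₁2 : ContDiff ℝ 2 v₁ := hv₁.of_le (WithTop.coe_le_coe.mpr le_top)
  have hdv₁ : ContDiff ℝ 1 (deriv v₁) := by
    have := hv₁2.iterate_deriv' 1 1
    simpa using this
  have hv₂2 : ContDiff ℝ 2 v₂ := hv₂.of_le (WithTop.coe_le_coe.mpr le_top)
  have hdv₂ : ContDiff ℝ 1 (deriv v₂) := by
    have := hv₂2.iterate_deriv' 1 1
    simpa using this
  -- boundary term
  set F : ℝ → ℝ := fun x => a x * deriv v₁ x * v₁ x + b x * v₁ x * v₂ x
      + r x * deriv v₂ x * v₂ x with hF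
  have hFc : ContDiff ℝ 1 F :=
    (((ha.mul hdv₁).mul hv₁').add ((hb.mul hv₁').mul hv₂')).add ((hr.mul hdv₂).mul hv₂')
  have hFsupp : HasCompactSupport F := by
    have h1 : HasCompactSupport (fun x => a x * deriv v₁ x * v₁ x) := hc₁.mul_left
    have h2 : HasCompactSupport (fun x => b x * v₁ x * v₂ x) := hc₂.mul_left
    have h3 : HasCompactSupport (fun x => r x * deriv v₂ x * v₂ x) := hc₂.mul_left
    exact (h1.add h2).add h3
  -- RHS integrands
  set g₁ : ℝ → ℝ := fun x => a x * (deriv v₁ x) ^ 2 - (m x + (b x) ^ 2 / r x) * (v₁ x) ^ 2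
    with hg₁
  set g₂ : ℝ → ℝ := fun x => r x * (deriv v₂ x + (b x / r x) * v₁ x) ^ 2 with hg₂
  have hg₁c : Continuous g₁ :=
    (ha.continuous.mul ((hdv₁.continuous).pow 2)).sub
      ((hm.add ((hb.continuous.pow 2).div hr.continuous hrne)).mul
        ((hv₁'.continuous).pow 2))
  have hg₂c : Continuous g₂ :=
    hr.continuous.mul (((hdv₂.continuous).add
      ((hb.continuous.div hr.continuous hrne).mul hv₁'.continuous)).pow 2)
  have hz₁ : ∀ x ∉ tsupport v₁, v₁ x = 0 ∧ deriv v₁ x = 0 := by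
    intro x hx
    refine ⟨image_eq_zero_of_notMem_tsupport hx, ?_⟩
    by_contra h
    exact hx (support_deriv_subset (Function.mem_support.mpr h))
  have hz₂ : ∀ x ∉ tsupport v₂, v₂ x = 0 ∧ deriv v₂ x = 0 := by
    intro x hx
    refine ⟨image_eq_zero_of_notMem_tsupport hx, ?_⟩
    by_contra h
    exact hx (support_deriv_subset (Function.mem_support.mpr h))
  have hg₁s : HasCompactSupport g₁ := by
    apply HasCompactSupport.intro hc₁.isCompact
    intro x hx
    obtain ⟨h1, h2⟩ := hz₁ x hx
    simp [hg₁, h1, h2]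
  have hg₂s : HasCompactSupport g₂ := by
    apply HasCompactSupport.intro (hc₁.isCompact.union hc₂.isCompact)
    intro x hx
    simp only [Set.mem_union] at hx
    push_neg at hx
    obtain ⟨h1, _⟩ := hz₁ x hx.1
    obtain ⟨_, h4⟩ := hz₂ x hx.2
    simp [hg₂, h1, h4]
  have hig₁ : Integrable g₁ := hg₁c.integrable_of_hasCompactSupport hg₁s
  have hig₂ : Integrable g₂ := hg₂c.integrable_of_hasCompactSupport hg₂s
  have hiF : Integrable (deriv F) :=
    (hFc.continuous_deriv le_rfl).integrable_of_hasCompactSupport hFsupp.deriv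
  -- pointwise identity
  have hpt : ∀ x : ℝ,
      (-(deriv (fun y => a y * deriv v₁ y) x) * v₁ x
        - m x * (v₁ x) ^ 2
        + b x * deriv v₂ x * v₁ x
        - deriv (fun y => b y * v₁ y) x * v₂ x
        - deriv (fun y => r y * deriv v₂ y) x * v₂ x)
      = g₁ x + g₂ x - deriv F x := by
    intro x
    have da : DifferentiableAt ℝ a x := ha.differentiable one_ne_zero x
    have dbx : DifferentiableAt ℝ b x := hb.differentiable one_ne_zero x
    have drx : DifferentiableAt ℝ r x := hr.differentiable one_ne_zero x
    have dv1 : DifferentiableAt ℝ v₁ x := hv₁'.differentiable one_ne_zero x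
    have dv2 : DifferentiableAt ℝ v₂ x := hv₂'.differentiable one_ne_zero x
    have ddv1 : DifferentiableAt ℝ (deriv v₁) x := hdv₁.differentiable one_ne_zero x
    have ddv2 : DifferentiableAt ℝ (deriv v₂) x := hdv₂.differentiable one_ne_zero x
    have dF : deriv F x =
        deriv (fun y => a y * deriv v₁ y) x * v₁ x + a x * deriv v₁ x * deriv v₁ x
        + (deriv (fun y => b y * v₁ y) x * v₂ x + b x * v₁ x * deriv v₂ x)
        + (deriv (fun y => r y * deriv v₂ y) x * v₂ x
            + r x * deriv v₂ x * deriv v₂ x) := by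
      rw [hF]
      rw [deriv_fun_add (((da.fun_mul ddv1).fun_mul dv1).fun_add ((dbx.fun_mul dv1).fun_mul dv2))
        ((drx.fun_mul ddv2).fun_mul dv2),
        deriv_fun_add ((da.fun_mul ddv1).fun_mul dv1) ((dbx.fun_mul dv1).fun_mul dv2),
        deriv_fun_mul (da.fun_mul ddv1) dv1, deriv_fun_mul (dbx.fun_mul dv1) dv2,
        deriv_fun_mul (drx.fun_mul ddv2) dv2]
    have key : g₁ x + g₂ x = a x * (deriv v₁ x) ^ 2 - m x * (v₁ x) ^ 2
        + r x * (deriv v₂ x) ^ 2 + 2 * b x * v₁ x * deriv v₂ x := by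
      rw [hg₁, hg₂]
      field_simp [hrne x]
      ring
    rw [dF]
    linarith [key]
  rw [MeasureTheory.integral_congr_ae (Filter.Eventually.of_forall hpt)]
  have h1 : ∫ x : ℝ, (g₁ x + g₂ x - deriv F x)
      = (∫ x : ℝ, (g₁ x + g₂ x)) - ∫ x : ℝ, deriv F x :=
    MeasureTheory.integral_sub (hig₁.add hig₂) hiF
  have h2 : ∫ x : ℝ, (g₁ x + g₂ x) = (∫ x : ℝ, g₁ x) + ∫ x : ℝ, g₂ x :=
    MeasureTheory.integral_add hig₁ hig₂
  rw [h1, h2, integral_deriv_eq_zero_of_compactSupport hFc hFsupp]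
  ring
end

section
/- Let H be a complex Hilbert space, let J : H → H be a bounded skew-adjoint operator (J* = −J), let L₀ : H → H be a bounded self-adjoint operator, and let L₁ : H → H be a bounded operator. Let α > 0 and C > 0, and let v ∈ H with v ≠ 0 and σ ∈ ℂ satisfy J((L₀ + L₁) v) = σ v. If ⟨L₀ v, v⟩ ≥ α ‖v‖² and |Re ⟨J(L₁ v), L₀ v⟩| ≤ C ‖v‖², then Re σ ≤ C/α. -/
/-!
Pair the eigenvalue equation `J ((L₀ + L₁) v) = σ v` with `L₀ v`. Since `L₀` is self-adjoint,
`⟪L₀ v, σ v⟫ = σ ⟪L₀ v, v⟫` with `⟪L₀ v, v⟫` real, and since `J` is skew-adjoint the term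
`⟪L₀ v, J (L₀ v)⟫` is purely imaginary. Taking real parts leaves
`Re σ · ⟪L₀ v, v⟫ = Re ⟪J (L₁ v), L₀ v⟫`, and coercivity of `L₀` together with the bound on the
right-hand side gives `Re σ ≤ C / α`.
-/

open RCLike ContinuousLinearMap
open scoped InnerProductSpace

section

variable {𝕜 E : Type*} [RCLike 𝕜] [NormedAddCommGroup E] [InnerProductSpace 𝕜 E] [CompleteSpace E]

theorem re_inner_map_self_eq_zero_of_adjoint_eq_neg {J : E →L[𝕜] E} (hJ : adjoint J = -J)
    (x : E) : re ⟪x, J x⟫_𝕜 = 0 := by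
  have h : re ⟪x, J x⟫_𝕜 = -re ⟪x, J x⟫_𝕜 :=
    calc re ⟪x, J x⟫_𝕜 = re ⟪adjoint J x, x⟫_𝕜 := by rw [adjoint_inner_left]
      _ = -re ⟪x, J x⟫_𝕜 := by rw [hJ, neg_apply, inner_neg_left, map_neg, inner_re_symm]
  linarith

theorem re_eigenvalue_mul_re_inner_eq {J L₀ L₁ : E →L[𝕜] E} (hJ : adjoint J = -J)
    (hL₀ : IsSelfAdjoint L₀) {v : E} {σ : 𝕜} (heig : J ((L₀ + L₁) v) = σ • v) :
    re σ * re ⟪L₀ v, v⟫_𝕜 = re ⟪J (L₁ v), L₀ v⟫_𝕜 := by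
  have hreal : ⟪L₀ v, v⟫_𝕜 = (re ⟪L₀ v, v⟫_𝕜 : 𝕜) :=
    (hL₀.isSymmetric.coe_reApplyInnerSelf_apply v).symm
  have hpair : σ * ⟪L₀ v, v⟫_𝕜 = ⟪L₀ v, J (L₀ v)⟫_𝕜 + ⟪L₀ v, J (L₁ v)⟫_𝕜 := by
    rw [← inner_smul_right, ← heig, add_apply, map_add, inner_add_right]
  have hre := congrArg re hpair
  rw [hreal, re_mul_ofReal, map_add, re_inner_map_self_eq_zero_of_adjoint_eq_neg hJ,
    zero_add] at hre
  rwa [inner_re_symm (J (L₁ v))]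

end

theorem le_div_of_mul_eq_of_le_of_abs_le {s a b α C n : ℝ} (hα : 0 < α) (hn : 0 < n)
    (hsab : s * a = b) (ha : α * n ≤ a) (hb : |b| ≤ C * n) : s ≤ C / α := by
  rw [le_div_iff₀ hα]
  rcases le_or_gt s 0 with hs | hs
  · have hC : 0 ≤ C := nonneg_of_mul_nonneg_left ((abs_nonneg b).trans hb) hn
    nlinarith
  · nlinarith [le_abs_self b]

theorem re_eigenvalue_bounded_general
    {H : Type*} [NormedAddCommGroup H] [InnerProductSpace ℂ H] [CompleteSpace H]
    (J L₀ L₁ : H →L[ℂ] H)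
    (hJ : ContinuousLinearMap.adjoint J = -J)
    (hL₀ : IsSelfAdjoint L₀)
    (α C : ℝ) (hα : 0 < α)
    (v : H) (hv : v ≠ 0) (σ : ℂ)
    (heig : J ((L₀ + L₁) v) = σ • v)
    (hcoer : α * ‖v‖ ^ 2 ≤ (inner ℂ (L₀ v) v : ℂ).re)
    (hbound : |(inner ℂ (J (L₁ v)) (L₀ v) : ℂ).re| ≤ C * ‖v‖ ^ 2) :
    σ.re ≤ C / α :=
  le_div_of_mul_eq_of_le_of_abs_le hα (by positivity)
    (re_eigenvalue_mul_re_inner_eq hJ hL₀ heig) hcoer hbound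

/-- Boundedness of unstable eigenvalues: if `J ((L₀ + L₁) v) = σ v` with `J`
skew-adjoint, `L₀` self-adjoint, `⟨L₀ v, v⟩ ≥ α ‖v‖²` and
`|Re ⟨J L₁ v, L₀ v⟩| ≤ C ‖v‖²`, then `Re σ ≤ C / α`. -/
theorem re_eigenvalue_bounded
    {H : Type*} [NormedAddCommGroup H] [InnerProductSpace ℂ H] [CompleteSpace H]
    (J L₀ L₁ : H →L[ℂ] H)
    (hJ : ContinuousLinearMap.adjoint J = -J)
    (hL₀ : IsSelfAdjoint L₀)
    (α C : ℝ) (hα : 0 < α) (hC : 0 < C)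
    (v : H) (hv : v ≠ 0) (σ : ℂ)
    (heig : J ((L₀ + L₁) v) = σ • v)
    (hcoer : α * ‖v‖ ^ 2 ≤ (inner ℂ (L₀ v) v : ℂ).re)
    (hbound : |(inner ℂ (J (L₁ v)) (L₀ v) : ℂ).re| ≤ C * ‖v‖ ^ 2) :
    σ.re ≤ C / α :=
  re_eigenvalue_bounded_general J L₀ L₁ hJ hL₀ α C hα v hv σ heig hcoer hbound
end

section
/- Let ρ∞ > 0, K∞ > 0, and let g, a ∈ ℝ satisfy ρ∞ g > a². Then for all ξ, k ∈ ℝ, every complex number X satisfying X² − 2 i a ξ X + ρ∞ K∞ (ξ² + k²)² + ρ∞ g k² + (ρ∞ g − a²) ξ² = 0 has Re X = 0. -/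
open Complex

/-- Roots of the characteristic polynomial of the Fourier symbol of the linearised
Euler–Korteweg operator at the endstate are purely imaginary under the saddle-point
condition `ρ_inf g > a²`. -/
theorem symbol_eigenvalues_purely_imaginary
    (ρ_inf K_inf g a : ℝ) (hρ : 0 < ρ_inf) (hK : 0 < K_inf) (hsaddle : a ^ 2 < ρ_inf * g)
    (ξ k : ℝ) (X : ℂ)
    (hroot : X ^ 2 - 2 * Complex.I * (a : ℂ) * (ξ : ℂ) * X
        + ((ρ_inf : ℂ) * (K_inf : ℂ) * ((ξ : ℂ) ^ 2 + (k : ℂ) ^ 2) ^ 2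
          + (ρ_inf : ℂ) * (g : ℂ) * (k : ℂ) ^ 2
          + ((ρ_inf : ℂ) * (g : ℂ) - (a : ℂ) ^ 2) * (ξ : ℂ) ^ 2) = 0) :
    X.re = 0 := by
  set c : ℝ := ρ_inf * K_inf * (ξ ^ 2 + k ^ 2) ^ 2 + ρ_inf * g * k ^ 2
      + (ρ_inf * g - a ^ 2) * ξ ^ 2 + a ^ 2 * ξ ^ 2 with hc
  have hc0 : 0 ≤ c := by
    have h0 : 0 ≤ ρ_inf * g - a ^ 2 := by nlinarith
    have : 0 ≤ ρ_inf * g := by nlinarith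
    rw [hc]; positivity
  set Y : ℂ := X - Complex.I * (a : ℂ) * (ξ : ℂ) with hY
  have hY2 : Y ^ 2 = -(c : ℂ) := by
    rw [hY]
    push_cast [hc]
    linear_combination hroot + (a : ℂ) ^ 2 * (ξ : ℂ) ^ 2 * Complex.I_sq
  have him : Y.re = 0 ∨ Y.im = 0 := by
    have := congrArg Complex.im hY2
    have h2 : Y.re * Y.im + Y.im * Y.re = 0 := by
      simpa [pow_two, Complex.mul_im] using this
    exact mul_eq_zero.mp (by linarith)
  have hre : Y.re ^ 2 - Y.im ^ 2 = -c := by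
    have := congrArg Complex.re hY2
    simpa [pow_two, Complex.mul_re] using this
    
  have hYre : Y.re = 0 := by
    rcases him with h | h
    · exact h
    · rw [h] at hre; nlinarith [sq_nonneg Y.re]
  have : X.re = Y.re := by
    rw [hY]
    simp [Complex.sub_re, Complex.mul_re, Complex.mul_im]
  rw [this, hYre]
end

section
/- Let γ > γ₀ > 0, n ≥ 0 and C, A, M > 0. Let φ : [0, ∞) → [0, ∞) be differentiable with φ(0) = 0 and φ′(t) ≤ C ( φ(t) + M e^{2γ t} (1 + t)^{−2n} ) for all t ≥ 0, and suppose that ∫₀^T e^{−2γ₀ t} φ(t) dt ≤ A e^{2(γ − γ₀) T} (1 + T)^{−2n} for all T ≥ 0. Then there exists C′ > 0, depending only on C, γ, γ₀, n, A and M, such that φ(T) ≤ C′ e^{2γ T} (1 + T)^{−2n} for all T ≥ 0. -/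
open Real intervalIntegral MeasureTheory Set

lemma rpow_shift_aux {n s T : ℝ} (hn : 0 ≤ n) (hs : 0 ≤ s) (hsT : s ≤ T) (hT : T ≤ s + 1) :
    (1 + s) ^ (-(2 * n)) ≤ 2 ^ (2 * n) * (1 + T) ^ (-(2 * n)) := by
  have h1s : (0:ℝ) < 1 + s := by linarith
  have h1T : (0:ℝ) < 1 + T := by linarith
  have hb : (1 + T) ^ (2 * n) ≤ 2 ^ (2 * n) * (1 + s) ^ (2 * n) := by
    calc (1 + T) ^ (2 * n) ≤ (2 * (1 + s)) ^ (2 * n) :=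
          Real.rpow_le_rpow h1T.le (by linarith) (by linarith)
      _ = 2 ^ (2 * n) * (1 + s) ^ (2 * n) :=
          Real.mul_rpow (by norm_num) h1s.le
  have ha : (0:ℝ) < (1 + s) ^ (2 * n) := Real.rpow_pos_of_pos h1s _
  have hb' : (0:ℝ) < (1 + T) ^ (2 * n) := Real.rpow_pos_of_pos h1T _
  rw [Real.rpow_neg h1s.le, Real.rpow_neg h1T.le, inv_eq_one_div, inv_eq_one_div,
    mul_one_div, div_le_div_iff₀ ha hb']
  nlinarith

lemma key_step (γ γ₀ n C A M : ℝ)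
    (hγ : γ₀ < γ) (hγ₀ : 0 < γ₀) (hn : 0 ≤ n)
    (hC : 0 < C) (hA : 0 < A) (hM : 0 < M)
    (φ : ℝ → ℝ)
    (hφdiff : ∀ t : ℝ, 0 ≤ t → DifferentiableAt ℝ φ t)
    (hφnonneg : ∀ t : ℝ, 0 ≤ t → 0 ≤ φ t)
    (hφ' : ∀ t : ℝ, 0 ≤ t →
      deriv φ t ≤ C * (φ t + M * Real.exp (2 * γ * t) * (1 + t) ^ (-(2 * n))))
    (hint : ∀ T : ℝ, 0 ≤ T →
      (∫ t in (0 : ℝ)..T, Real.exp (-(2 * γ₀) * t) * φ t)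
        ≤ A * Real.exp (2 * (γ - γ₀) * T) * (1 + T) ^ (-(2 * n)))
    (s T : ℝ) (hs : 0 ≤ s) (hsT : s ≤ T) (hT1 : T ≤ s + 1) :
    φ T ≤ φ s + (C * A + C * M * 2 ^ (2 * n)) * Real.exp (2 * γ * T)
        * (1 + T) ^ (-(2 * n)) := by
  have hT0 : 0 ≤ T := hs.trans hsT
  have hγpos : 0 < γ := hγ₀.trans hγ
  set w : ℝ → ℝ := fun t => Real.exp (-(2 * γ₀) * t) * φ t with hw
  have hφcont : ContinuousOn φ (Icc 0 T) := fun t ht =>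
    ((hφdiff t ht.1).continuousAt).continuousWithinAt
  have hwcont : ContinuousOn w (Icc 0 T) :=
    ((Real.continuous_exp.comp (continuous_const.mul continuous_id)).continuousOn).mul hφcont
  set K : ℝ := C * M * Real.exp (2 * γ * T) * (1 + s) ^ (-(2 * n)) with hK
  have hKnonneg : 0 ≤ K := by
    have := Real.rpow_pos_of_pos (show (0:ℝ) < 1 + s by linarith) (-(2 * n))
    positivity
  set ψ : ℝ → ℝ := fun t => C * Real.exp (2 * γ₀ * T) * w t + K with hψ
  have hwcont' : ContinuousOn w (Icc s T) := hwcont.mono (Icc_subset_Icc hs le_rfl)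
  have hψint : IntegrableOn ψ (Icc s T) := by
    apply ContinuousOn.integrableOn_Icc
    exact (continuousOn_const.mul hwcont').add continuousOn_const
  -- step 1 : FTC-type bound
  have step1 : φ T - φ s ≤ ∫ t in s..T, ψ t := by
    apply sub_le_integral_of_hasDeriv_right_of_le hsT
      (hφcont.mono (Icc_subset_Icc hs le_rfl))
      (fun x hx => ((hφdiff x (hs.trans hx.1.le)).hasDerivAt).hasDerivWithinAt)
      hψint
    intro x hx
    have hx0 : 0 ≤ x := hs.trans hx.1.le
    have h1 : C * φ x ≤ C * (Real.exp (2 * γ₀ * T) * w x) := by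
      have he : (1:ℝ) ≤ Real.exp (2 * γ₀ * T) * Real.exp (-(2 * γ₀) * x) := by
        rw [← Real.exp_add]
        have : (0:ℝ) ≤ 2 * γ₀ * T + -(2 * γ₀) * x := by nlinarith [hx.2]
        calc (1:ℝ) = Real.exp 0 := by simp
          _ ≤ _ := Real.exp_le_exp.2 this
      have hφx := hφnonneg x hx0
      have : φ x ≤ Real.exp (2 * γ₀ * T) * w x := by
        simp only [hw]
        nlinarith
      nlinarith
    have h2 : C * (M * Real.exp (2 * γ * x) * (1 + x) ^ (-(2 * n))) ≤ K := by
      have he : Real.exp (2 * γ * x) ≤ Real.exp (2 * γ * T) := by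
        apply Real.exp_le_exp.2; nlinarith [hx.2]
      have hr : (1 + x) ^ (-(2 * n)) ≤ (1 + s) ^ (-(2 * n)) :=
        Real.rpow_le_rpow_of_nonpos (by linarith) (by linarith [hx.1]) (by linarith)
      have hrpos : (0:ℝ) ≤ (1 + x) ^ (-(2 * n)) :=
        (Real.rpow_pos_of_pos (by linarith) _).le
      have hmain : M * Real.exp (2 * γ * x) * (1 + x) ^ (-(2 * n))
          ≤ M * Real.exp (2 * γ * T) * (1 + s) ^ (-(2 * n)) :=
        mul_le_mul (mul_le_mul_of_nonneg_left he hM.le) hr hrpos (by positivity)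
      calc C * (M * Real.exp (2 * γ * x) * (1 + x) ^ (-(2 * n)))
          ≤ C * (M * Real.exp (2 * γ * T) * (1 + s) ^ (-(2 * n))) :=
            mul_le_mul_of_nonneg_left hmain hC.le
        _ = K := by rw [hK]; ring
    calc deriv φ x ≤ C * (φ x + M * Real.exp (2 * γ * x) * (1 + x) ^ (-(2 * n))) :=
          hφ' x hx0
      _ = C * φ x + C * (M * Real.exp (2 * γ * x) * (1 + x) ^ (-(2 * n))) := by ring
      _ ≤ C * (Real.exp (2 * γ₀ * T) * w x) + K := add_le_add h1 h2
      _ = ψ x := by simp only [hψ]; ring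
  -- step 2 : compute the integral of ψ
  have hwint : IntervalIntegrable w volume s T := by
    apply ContinuousOn.intervalIntegrable
    rwa [uIcc_of_le hsT]
  have step2 : (∫ t in s..T, ψ t)
      = C * Real.exp (2 * γ₀ * T) * (∫ t in s..T, w t) + (T - s) * K := by
    simp only [hψ]
    rw [intervalIntegral.integral_add (hwint.const_mul _) intervalIntegrable_const,
      intervalIntegral.integral_const_mul, intervalIntegral.integral_const, smul_eq_mul]
  -- step 3 : bound the integral of w on [s,T] by the integral on [0,T]
  have hwint0 : IntervalIntegrable w volume 0 s := by
    apply ContinuousOn.intervalIntegrable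
    rw [uIcc_of_le hs]
    exact hwcont.mono (Icc_subset_Icc le_rfl hsT)
  have step3 : (∫ t in s..T, w t) ≤ ∫ t in (0:ℝ)..T, w t := by
    have hadd := intervalIntegral.integral_add_adjacent_intervals hwint0 hwint
    have hpos : 0 ≤ ∫ t in (0:ℝ)..s, w t := by
      apply intervalIntegral.integral_nonneg hs
      intro u hu
      exact mul_nonneg (Real.exp_pos _).le (hφnonneg u hu.1)
    linarith
  have step4 := hint T hT0
  -- combine
  have hEP : Real.exp (2 * γ₀ * T) * Real.exp (2 * (γ - γ₀) * T) = Real.exp (2 * γ * T) := by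
    rw [← Real.exp_add]; ring_nf
  have hPpos : (0:ℝ) < (1 + T) ^ (-(2 * n)) :=
    Real.rpow_pos_of_pos (by linarith) _
  have hEpos := Real.exp_pos (2 * γ * T)
  have hc1 : C * Real.exp (2 * γ₀ * T) * (∫ t in s..T, w t)
      ≤ C * A * Real.exp (2 * γ * T) * (1 + T) ^ (-(2 * n)) := by
    have h0 : (0:ℝ) < C * Real.exp (2 * γ₀ * T) := by positivity
    calc C * Real.exp (2 * γ₀ * T) * (∫ t in s..T, w t)
        ≤ C * Real.exp (2 * γ₀ * T) * (A * Real.exp (2 * (γ - γ₀) * T) * (1 + T) ^ (-(2 * n))) :=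
          mul_le_mul_of_nonneg_left (step3.trans step4) h0.le
      _ = C * A * (Real.exp (2 * γ₀ * T) * Real.exp (2 * (γ - γ₀) * T)) * (1 + T) ^ (-(2 * n)) := by
          ring
      _ = C * A * Real.exp (2 * γ * T) * (1 + T) ^ (-(2 * n)) := by rw [hEP]
  have hc2 : (T - s) * K ≤ C * M * 2 ^ (2 * n) * Real.exp (2 * γ * T) * (1 + T) ^ (-(2 * n)) := by
    have h1 : (T - s) * K ≤ K := by nlinarith
    have h2 : K ≤ C * M * 2 ^ (2 * n) * Real.exp (2 * γ * T) * (1 + T) ^ (-(2 * n)) := by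
      have hsh := rpow_shift_aux hn hs hsT hT1
      have h0 : (0:ℝ) ≤ C * M * Real.exp (2 * γ * T) := by positivity
      calc K = C * M * Real.exp (2 * γ * T) * (1 + s) ^ (-(2 * n)) := hK
        _ ≤ C * M * Real.exp (2 * γ * T) * (2 ^ (2 * n) * (1 + T) ^ (-(2 * n))) :=
            mul_le_mul_of_nonneg_left hsh h0
        _ = C * M * 2 ^ (2 * n) * Real.exp (2 * γ * T) * (1 + T) ^ (-(2 * n)) := by ring
    exact h1.trans h2
  have hstep := step1
  rw [step2] at hstep
  have hring : (C * A + C * M * 2 ^ (2 * n)) * Real.exp (2 * γ * T) * (1 + T) ^ (-(2 * n))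
      = C * A * Real.exp (2 * γ * T) * (1 + T) ^ (-(2 * n))
        + C * M * 2 ^ (2 * n) * Real.exp (2 * γ * T) * (1 + T) ^ (-(2 * n)) := by ring
  linarith

/-- Final step of the case `s = 0` of the resolvent estimate: a nonnegative
differentiable function `φ` with `φ(0) = 0` satisfying the differential inequality
`φ' ≤ C(φ + M e^{2γt}(1+t)^{-2n})` and the time-integrated weighted bound
`∫₀^T e^{-2γ₀ t} φ ≤ A e^{2(γ-γ₀)T}(1+T)^{-2n}` satisfies the pointwise bound
`φ(T) ≤ C' e^{2γT}(1+T)^{-2n}`. -/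
theorem pointwise_bound_from_integrated_bound
    (γ γ₀ n C A M : ℝ)
    (hγ : γ₀ < γ) (hγ₀ : 0 < γ₀) (hn : 0 ≤ n)
    (hC : 0 < C) (hA : 0 < A) (hM : 0 < M)
    (φ : ℝ → ℝ)
    (hφdiff : ∀ t : ℝ, 0 ≤ t → DifferentiableAt ℝ φ t)
    (hφnonneg : ∀ t : ℝ, 0 ≤ t → 0 ≤ φ t)
    (hφ0 : φ 0 = 0)
    (hφ' : ∀ t : ℝ, 0 ≤ t →
      deriv φ t ≤ C * (φ t + M * Real.exp (2 * γ * t) * (1 + t) ^ (-(2 * n))))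
    (hint : ∀ T : ℝ, 0 ≤ T →
      (∫ t in (0 : ℝ)..T, Real.exp (-(2 * γ₀) * t) * φ t)
        ≤ A * Real.exp (2 * (γ - γ₀) * T) * (1 + T) ^ (-(2 * n))) :
    ∃ C' : ℝ, 0 < C' ∧ ∀ T : ℝ, 0 ≤ T →
      φ T ≤ C' * Real.exp (2 * γ * T) * (1 + T) ^ (-(2 * n)) := by
  have h2n : (0:ℝ) < 2 ^ (2 * n) := Real.rpow_pos_of_pos (by norm_num) _
  refine ⟨A + C * A + C * M * 2 ^ (2 * n), by positivity, ?_⟩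
  intro T hT0
  have hPpos : (0:ℝ) < (1 + T) ^ (-(2 * n)) := Real.rpow_pos_of_pos (by linarith) _
  have hEpos := Real.exp_pos (2 * γ * T)
  set R : ℝ := (C * A + C * M * 2 ^ (2 * n)) * Real.exp (2 * γ * T)
      * (1 + T) ^ (-(2 * n)) with hR
  rcases le_or_gt T 1 with hT1 | hT1
  · -- small time: start from s = 0
    have h := key_step γ γ₀ n C A M hγ hγ₀ hn hC hA hM φ hφdiff hφnonneg hφ' hint
      0 T le_rfl hT0 (by linarith)
    rw [hφ0] at h
    have hring : (A + C * A + C * M * 2 ^ (2 * n)) * Real.exp (2 * γ * T)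
        * (1 + T) ^ (-(2 * n))
        = A * Real.exp (2 * γ * T) * (1 + T) ^ (-(2 * n))
          + (C * A + C * M * 2 ^ (2 * n)) * Real.exp (2 * γ * T)
            * (1 + T) ^ (-(2 * n)) := by ring
    have hApos : 0 < A * Real.exp (2 * γ * T) * (1 + T) ^ (-(2 * n)) :=
      mul_pos (mul_pos hA hEpos) hPpos
    linarith
  · -- large time: average over s ∈ [T-1, T]
    have hT1' : (0:ℝ) ≤ T - 1 := by linarith
    have hkey : ∀ s ∈ Icc (T - 1) T, φ T - R ≤ φ s := by
      intro s hs
      have h := key_step γ γ₀ n C A M hγ hγ₀ hn hC hA hM φ hφdiff hφnonneg hφ' hint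
        s T (by linarith [hs.1]) hs.2 (by linarith [hs.1])
      rw [← hR] at h
      linarith
    have hφcont : ContinuousOn φ (Icc (T - 1) T) := fun t ht =>
      ((hφdiff t (by linarith [ht.1])).continuousAt).continuousWithinAt
    have hφint : IntervalIntegrable φ volume (T - 1) T := by
      apply ContinuousOn.intervalIntegrable
      rwa [uIcc_of_le (by linarith)]
    -- (1) φ T - R ≤ ∫_{T-1}^T φ
    have hmono1 : φ T - R ≤ ∫ s in (T - 1)..T, φ s := by
      have := intervalIntegral.integral_mono_on (by linarith : T - 1 ≤ T)
        intervalIntegrable_const hφint hkey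
      rw [intervalIntegral.integral_const, smul_eq_mul] at this
      have h1 : T - (T - 1) = 1 := by ring
      rw [h1, one_mul] at this
      exact this
    -- (2) ∫_{T-1}^T φ ≤ exp(2γ₀T) * ∫_{T-1}^T w
    set w : ℝ → ℝ := fun t => Real.exp (-(2 * γ₀) * t) * φ t with hw
    have hwcont : ∀ a b : ℝ, 0 ≤ a → a ≤ b → IntervalIntegrable w volume a b := by
      intro a b ha hab
      apply ContinuousOn.intervalIntegrable
      rw [uIcc_of_le hab]
      exact ((Real.continuous_exp.comp (continuous_const.mul continuous_id)).continuousOn).mul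
        (fun t ht => ((hφdiff t (ha.trans ht.1)).continuousAt).continuousWithinAt)
    have hmono2 : (∫ s in (T - 1)..T, φ s)
        ≤ Real.exp (2 * γ₀ * T) * ∫ s in (T - 1)..T, w s := by
      rw [← intervalIntegral.integral_const_mul]
      apply intervalIntegral.integral_mono_on (by linarith : T - 1 ≤ T) hφint
        ((hwcont (T - 1) T hT1' (by linarith)).const_mul _)
      intro x hx
      have hx0 : 0 ≤ x := hT1'.trans hx.1
      have he : (1:ℝ) ≤ Real.exp (2 * γ₀ * T) * Real.exp (-(2 * γ₀) * x) := by
        rw [← Real.exp_add]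
        have : (0:ℝ) ≤ 2 * γ₀ * T + -(2 * γ₀) * x := by nlinarith [hx.2]
        calc (1:ℝ) = Real.exp 0 := by simp
          _ ≤ _ := Real.exp_le_exp.2 this
      have hφx := hφnonneg x hx0
      simp only [hw]
      nlinarith
    -- (3) ∫_{T-1}^T w ≤ ∫_0^T w ≤ A e^{2(γ-γ₀)T} (1+T)^{-2n}
    have hmono3 : (∫ s in (T - 1)..T, w s) ≤ ∫ s in (0:ℝ)..T, w s := by
      have hadd := intervalIntegral.integral_add_adjacent_intervals
        (hwcont 0 (T - 1) le_rfl hT1') (hwcont (T - 1) T hT1' (by linarith))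
      have hpos : 0 ≤ ∫ s in (0:ℝ)..(T - 1), w s := by
        apply intervalIntegral.integral_nonneg hT1'
        intro u hu
        exact mul_nonneg (Real.exp_pos _).le (hφnonneg u hu.1)
      linarith
    have h4 := hint T hT0
    have hEP : Real.exp (2 * γ₀ * T) * Real.exp (2 * (γ - γ₀) * T)
        = Real.exp (2 * γ * T) := by
      rw [← Real.exp_add]; ring_nf
    have hc : Real.exp (2 * γ₀ * T) * (∫ s in (T - 1)..T, w s)
        ≤ A * Real.exp (2 * γ * T) * (1 + T) ^ (-(2 * n)) := by
      have h0 := (Real.exp_pos (2 * γ₀ * T)).le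
      calc Real.exp (2 * γ₀ * T) * (∫ s in (T - 1)..T, w s)
          ≤ Real.exp (2 * γ₀ * T)
            * (A * Real.exp (2 * (γ - γ₀) * T) * (1 + T) ^ (-(2 * n))) :=
            mul_le_mul_of_nonneg_left (hmono3.trans h4) h0
        _ = A * (Real.exp (2 * γ₀ * T) * Real.exp (2 * (γ - γ₀) * T))
            * (1 + T) ^ (-(2 * n)) := by ring
        _ = A * Real.exp (2 * γ * T) * (1 + T) ^ (-(2 * n)) := by rw [hEP]
    have hring : (A + C * A + C * M * 2 ^ (2 * n)) * Real.exp (2 * γ * T)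
        * (1 + T) ^ (-(2 * n))
        = A * Real.exp (2 * γ * T) * (1 + T) ^ (-(2 * n)) + R := by
      rw [hR]; ring
    linarith
end
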